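/- Let (Σ, L, ξ) be a state property system with Cartan map κ, let ω ⊆ Σ be a connection component of the associated closure space (Σ, κ(L)), and suppose s(ω) ∈ L is a property with κ(s(ω)) = ω. Set Σ_ω = ω, L_ω = [0, s(ω)] = {a ∈ L | 0 ≤ a ≤ s(ω)} (a complete lattice with top s(ω) and bottom 0, with the order induced from L), and ξ_ω : Σ_ω → P(L_ω), ξ_ω(p) = ξ(p) ∩ L_ω. Then (Σ_ω, L_ω, ξ_ω) is a pure nonclassical state property system, i.e. it satisfies the three axioms of a state property system and its only classical properties are 0 and s(ω). -/

import Mathlib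

/-- The Cartan map of a state property system: `κ a = {p | a ∈ ξ p}`. -/
def cartan {S L : Type*} (ξ : S → Set L) (a : L) : Set S := {p | a ∈ ξ p}

/-- `(S, L, ξ)` is a state property system. -/
structure IsSPS {S L : Type*} [CompleteLattice L] (ξ : S → Set L) : Prop where
  bot_not_mem : ∀ p, (⊥ : L) ∉ ξ p
  sInf_mem : ∀ p (A : Set L), (∀ a ∈ A, a ∈ ξ p) → sInf A ∈ ξ p
  le_iff : ∀ a b : L, a ≤ b ↔ ∀ r, a ∈ ξ r → b ∈ ξ r
/-- `F` is the family of closed sets of a closure space on `X`. -/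
def IsClosureSpace {X : Type*} (F : Set (Set X)) : Prop :=
  ∅ ∈ F ∧ Set.univ ∈ F ∧ ∀ G ⊆ F, G.Nonempty → ⋂₀ G ∈ F
/-- `a` and `b` are separated by a superselection rule. -/
def Ssr {S L : Type*} [CompleteLattice L] (ξ : S → Set L) (a b : L) : Prop :=
  ∀ p, a ⊔ b ∈ ξ p → a ∈ ξ p ∨ b ∈ ξ p

/-- `a` is a classical property of the state property system. -/
def IsClassicalProp {S L : Type*} [CompleteLattice L] (ξ : S → Set L) (a : L) : Prop :=
  ∃ ac : L, a ⊔ ac = ⊤ ∧ a ⊓ ac = ⊥ ∧ Ssr ξ a ac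
/-- `B` is a closed set of the subspace induced on `A` by the closure structure `F`. -/
def SubClosed {X : Type*} (F : Set (Set X)) (A B : Set X) : Prop :=
  ∃ f ∈ F, B = f ∩ A

/-- `A` is a connected subset: the only clopen subsets of the induced subspace are `∅` and `A`. -/
def IsConnSubset {X : Type*} (F : Set (Set X)) (A : Set X) : Prop :=
  ∀ B ⊆ A, SubClosed F A B → SubClosed F A (A \ B) → B = ∅ ∨ B = A

/-- The connection component of `x`: the union of all connected subsets containing `x`. -/
def connComp {X : Type*} (F : Set (Set X)) (x : X) : Set X :=
  ⋃₀ {A : Set X | x ∈ A ∧ IsConnSubset F A}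

/-!
A property `a ≤ s(ω)` of the restricted system with a classical complement `aᶜ` splits `ω` into the
two sets `κ(a)` and `κ(aᶜ)`: their union is `ω` because `a ∨ aᶜ = s(ω)` is actual on `ω` and the
superselection rule decides it, and they are disjoint because `a ∧ aᶜ = 0` is never actual. Both are
closed, so connectedness of `ω` forces `κ(a) = ∅` or `κ(a) = ω`, i.e. `a = 0` or `a = s(ω)`.
The state property system axioms for the restriction are inherited from `(Σ, L, ξ)`, the empty
meet in `[0, s(ω)]` being `s(ω)`, which is actual on all of `ω = κ(s(ω))`.
-/

section ClosureSpace

variable {X : Type*} {F : Set (Set X)}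

lemma SubClosed.inter_of_subset {U A B : Set X} (hB : SubClosed F U B) (hAU : A ⊆ U) :
    SubClosed F A (B ∩ A) := by
  obtain ⟨f, hf, rfl⟩ := hB
  exact ⟨f, hf, by rw [Set.inter_assoc, Set.inter_eq_right.mpr hAU]⟩

lemma isConnSubset_sUnion {𝒜 : Set (Set X)} {x : X} (hx : ∀ A ∈ 𝒜, x ∈ A)
    (h𝒜 : ∀ A ∈ 𝒜, IsConnSubset F A) : IsConnSubset F (⋃₀ 𝒜) := by
  intro B hBU hB hBc
  have trace : ∀ A ∈ 𝒜, B ∩ A = ∅ ∨ B ∩ A = A := by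
    intro A hA
    have hAU : A ⊆ ⋃₀ 𝒜 := Set.subset_sUnion_of_mem hA
    have hdiff : A \ (B ∩ A) = (⋃₀ 𝒜 \ B) ∩ A := by
      ext y; constructor
      · rintro ⟨hyA, hyB⟩; exact ⟨⟨hAU hyA, fun h => hyB ⟨h, hyA⟩⟩, hyA⟩
      · rintro ⟨⟨_, hyB⟩, hyA⟩; exact ⟨hyA, fun h => hyB h.1⟩
    exact h𝒜 A hA _ Set.inter_subset_right (hB.inter_of_subset hAU)
      (hdiff ▸ hBc.inter_of_subset hAU)
  by_cases hxB : x ∈ B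
  · refine Or.inr (hBU.antisymm fun y ⟨A, hA, hyA⟩ => ?_)
    rcases trace A hA with h | h
    · exact absurd (h ▸ ⟨hxB, hx A hA⟩ : x ∈ (∅ : Set X)) id
    · exact (h.symm ▸ hyA : y ∈ B ∩ A).1
  · refine Or.inl (Set.eq_empty_of_forall_notMem fun y hyB => ?_)
    obtain ⟨A, hA, hyA⟩ := hBU hyB
    rcases trace A hA with h | h
    · exact (h ▸ ⟨hyB, hyA⟩ : y ∈ (∅ : Set X))
    · exact hxB (h.symm ▸ hx A hA : x ∈ B ∩ A).1

lemma isConnSubset_connComp (x : X) : IsConnSubset F (connComp F x) :=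
  isConnSubset_sUnion (fun _ hA => hA.1) fun _ hA => hA.2

end ClosureSpace

namespace IsSPS

variable {S L : Type*} [CompleteLattice L] {ξ : S → Set L}

lemma cartan_subset_cartan_iff (hξ : IsSPS ξ) {a b : L} : cartan ξ a ⊆ cartan ξ b ↔ a ≤ b :=
  (hξ.le_iff a b).symm

lemma inf_mem (hξ : IsSPS ξ) {p : S} {a b : L} (ha : a ∈ ξ p) (hb : b ∈ ξ p) : a ⊓ b ∈ ξ p := by
  simpa only [sInf_pair] using hξ.sInf_mem p {a, b} (by simp [ha, hb])

lemma eq_bot_of_cartan_eq_empty (hξ : IsSPS ξ) {a : L} (ha : cartan ξ a = ∅) : a = ⊥ :=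
  le_bot_iff.mp (hξ.cartan_subset_cartan_iff.mp (ha ▸ Set.empty_subset _))

lemma cartan_diff_eq_cartan (hξ : IsSPS ξ) {a b s : L} (hb : b ≤ s) (hinf : a ⊓ b = ⊥)
    (hcover : ∀ p ∈ cartan ξ s, a ∈ ξ p ∨ b ∈ ξ p) : cartan ξ s \ cartan ξ a = cartan ξ b := by
  ext p; constructor
  · rintro ⟨hps, hpa⟩; exact (hcover p hps).resolve_left hpa
  · intro hpb
    refine ⟨hξ.cartan_subset_cartan_iff.mpr hb hpb, fun hpa => ?_⟩
    exact hξ.bot_not_mem p (hinf ▸ hξ.inf_mem hpa hpb)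

variable (hξ : IsSPS ξ) {ω : Set S} {s : L} (hs : cartan ξ s = ω) [Fact ((⊥ : L) ≤ s)]
include hξ hs

lemma restrict_Icc : IsSPS fun p : ω => {a : Set.Icc (⊥ : L) s | (a : L) ∈ ξ p} where
  bot_not_mem p := hξ.bot_not_mem p
  sInf_mem p A hA := by
    rcases A.eq_empty_or_nonempty with rfl | hne
    · rw [sInf_empty]
      exact (hs ▸ p.2 : (p : S) ∈ cartan ξ s)
    · show ((sInf A : Set.Icc (⊥ : L) s) : L) ∈ ξ p
      rw [Set.Icc.coe_sInf bot_le hne]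
      exact hξ.sInf_mem p _ (Set.forall_mem_image.mpr hA)
  le_iff a b := by
    refine ⟨fun hab r => (hξ.le_iff a b).mp hab r, fun h => (hξ.le_iff a b).mpr fun r har => ?_⟩
    have hrω : r ∈ ω := hs ▸ (hξ.le_iff a s).mp a.2.2 r har
    exact h ⟨r, hrω⟩ har

lemma eq_bot_or_eq_top_of_isClassicalProp_restrict_Icc
    (hconn : IsConnSubset (Set.range (cartan ξ)) ω) (a : Set.Icc (⊥ : L) s)
    (ha : IsClassicalProp (fun p : ω => {a : Set.Icc (⊥ : L) s | (a : L) ∈ ξ p}) a) :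
    a = ⊥ ∨ a = ⊤ := by
  obtain ⟨ac, hsup, hinf, hssr⟩ := ha
  have hsupL : (a : L) ⊔ ac = s := congrArg Subtype.val hsup
  have hcover : ∀ p ∈ cartan ξ s, (a : L) ∈ ξ p ∨ (ac : L) ∈ ξ p := fun p hp =>
    hssr ⟨p, hs ▸ hp⟩ (show (a : L) ⊔ ac ∈ ξ p by rw [hsupL]; exact hp)
  have hsplit := hξ.cartan_diff_eq_cartan ac.2.2 (congrArg Subtype.val hinf) hcover
  have haω : cartan ξ a ⊆ ω := hs ▸ hξ.cartan_subset_cartan_iff.mpr a.2.2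
  have hclosed : SubClosed (Set.range (cartan ξ)) ω (cartan ξ a) :=
    ⟨cartan ξ a, Set.mem_range_self _, (Set.inter_eq_left.mpr haω).symm⟩
  have hclosedc : SubClosed (Set.range (cartan ξ)) ω (ω \ cartan ξ a) :=
    ⟨cartan ξ ac, Set.mem_range_self _, by rw [← hs, hsplit, Set.inter_eq_left.mpr
      (hξ.cartan_subset_cartan_iff.mpr ac.2.2)]⟩
  rcases hconn _ haω hclosed hclosedc with h | h
  · exact Or.inl (Subtype.ext (hξ.eq_bot_of_cartan_eq_empty h))
  · exact Or.inr (Subtype.ext (le_antisymm a.2.2 (hξ.cartan_subset_cartan_iff.mp (hs ▸ h.ge))))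

end IsSPS

/-- if `ω` is a connection component of `(Σ, κ(L))` and `s(ω) ∈ L`
satisfies `κ(s(ω)) = ω`, then `(Σ_ω, L_ω, ξ_ω)`, with `Σ_ω = ω`,
`L_ω = [0, s(ω)]` (a complete lattice with the order induced from `L`) and
`ξ_ω(p) = ξ(p) ∩ L_ω`, is a pure nonclassical state property system. -/
theorem stmt13 {S L : Type*} [CompleteLattice L] (ξ : S → Set L) (hξ : IsSPS ξ)
    (ω : Set S) (hω : ∃ x : S, ω = connComp (Set.range (cartan ξ)) x)
    (s : L) (hs : cartan ξ s = ω) [Fact ((⊥ : L) ≤ s)] :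
    let ξω : ω → Set (Set.Icc (⊥ : L) s) := fun p => {a | (a : L) ∈ ξ (p : S)}
    IsSPS ξω ∧ (∀ a : Set.Icc (⊥ : L) s, IsClassicalProp ξω a → a = ⊥ ∨ a = ⊤) := by
  obtain ⟨x, rfl⟩ := hω
  exact ⟨hξ.restrict_Icc hs,
    hξ.eq_bot_or_eq_top_of_isClassicalProp_restrict_Icc hs (isConnSubset_connComp x)⟩
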